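/- arXiv:1711.05461 — 3 statements merged into one kernel-verified Lean document; each statement's English description precedes it below -/
import Mathlib

section
/- Let g: T → ℝ be the function on the circle T = ℝ/ℤ defined by g(u) = u for u ∈ (-1/2, 1/2) and g(±1/2) = 0, and let f be a C¹ probability density on T. For 0 ≤ ε < 1 define Φ_f(x) = x + ε ∫_T g(y-x) f(y) dy. Then Φ_f is differentiable with Φ_f'(x) = 1 + ε(f(x+1/2) - 1) for all x ∈ T. -/
open MeasureTheory Function Set

/-- The sawtooth interaction function `g` on the circle, lifted 1-periodically to `ℝ`:
`g(u) = u` for `u ∈ (-1/2, 1/2)` and `g(±1/2) = 0`. -/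
noncomputable def saw (u : ℝ) : ℝ :=
  if Int.fract (u + 1/2) = 0 then 0 else u - (round u : ℤ)

/-- The lift of the diffusive coupling map `Φ_f(x) = x + ε ∫ g(y-x) f(y) dy`. -/
noncomputable def Phi (ε : ℝ) (f : ℝ → ℝ) (x : ℝ) : ℝ :=
  x + ε * ∫ y in (0:ℝ)..1, saw (y - x) * f y

/-- Property (F): `f` is a C¹ probability density on the circle (1-periodic on `ℝ`). -/
def PropF (f : ℝ → ℝ) : Prop :=
  ContDiff ℝ 1 f ∧ Function.Periodic f 1 ∧ (∀ x, 0 ≤ f x) ∧ (∫ x in (0:ℝ)..1, f x) = 1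

/-- `f'` is Lipschitz. -/
def LipDeriv (f : ℝ → ℝ) : Prop := ∃ L : ℝ, ∀ x y, |deriv f x - deriv f y| ≤ L * |x - y|

/-- Total variation over one period, for C¹ functions. -/
noncomputable def tvar (f : ℝ → ℝ) : ℝ := ∫ x in (0:ℝ)..1, |deriv f x|

/-- L¹ norm over one period. -/
noncomputable def l1 (f : ℝ → ℝ) : ℝ := ∫ x in (0:ℝ)..1, |f x|

/-- BV norm for C¹ functions. -/
noncomputable def bv (f : ℝ → ℝ) : ℝ := l1 f + tvar f

/-- Transfer (Perron–Frobenius) operator of an `N`-fold covering map given by its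
(bijective, strictly monotone) lift `F : ℝ → ℝ`. -/
noncomputable def transfer (F : ℝ → ℝ) (N : ℕ) (u : ℝ → ℝ) (y : ℝ) : ℝ :=
  ∑ k ∈ Finset.range N,
    u (Function.invFun F (y + k)) / |deriv F (Function.invFun F (y + k))|

/-- Property (T): `T` is (the lift of) a C² `N`-fold covering expanding circle map with
`min |T'| = ω > 1`, `T''` Lipschitz, `N < ω²`. -/
def PropT (T : ℝ → ℝ) (N : ℕ) (ω : ℝ) : Prop :=
  ContDiff ℝ 2 T ∧
  ((∀ x, T (x + 1) = T x + N) ∨ (∀ x, T (x + 1) = T x - N)) ∧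
  (∀ x, ω ≤ |deriv T x|) ∧ 1 < ω ∧
  (∃ L : ℝ, ∀ x y, |deriv (deriv T) x - deriv (deriv T) y| ≤ L * |x - y|) ∧
  (N : ℝ) < ω ^ 2

/-- The self-consistent transfer operator `F_ε(f) = P_{T ∘ Φ_f} f`. -/
noncomputable def Feps (T : ℝ → ℝ) (N : ℕ) (ε : ℝ) (f : ℝ → ℝ) : ℝ → ℝ :=
  transfer (T ∘ Phi ε f) N f

/-- The class `C_{R,S}^c` of densities. -/
def CRSc (R S c : ℝ) : Set (ℝ → ℝ) :=
  {f | PropF f ∧ tvar f ≤ R ∧ (∀ x, |deriv f x| ≤ S) ∧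
    ∀ x y, |deriv f x - deriv f y| ≤ c * |x - y|}

/-- Property (F'): `f` satisfies (F), has Lipschitz derivative, and its support avoids
(an interval of length `1/2` on the circle, i.e.) all integer translates of some `[a, a+1/2]`. -/
def PropF' (f : ℝ → ℝ) : Prop :=
  PropF f ∧ LipDeriv f ∧
    ∃ a : ℝ, ∀ x, f x ≠ 0 → ∀ k : ℤ, x + (k : ℝ) ∉ Set.Icc a (a + 1/2)

/-- The length of the minimal closed arc of the circle containing the support of `f`. -/
noncomputable def suppLen (f : ℝ → ℝ) : ℝ :=
  sInf {L | 0 ≤ L ∧ ∃ a : ℝ, ∀ x, f x ≠ 0 → ∃ k : ℤ, x + (k : ℝ) ∈ Set.Icc a (a + L)}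

/-- Wasserstein-1 distance between the measure `f dλ` on the circle and the point mass `δ_y`,
via Kantorovich–Rubinstein duality (1-Lipschitz periodic test functions). -/
noncomputable def W1delta (f : ℝ → ℝ) (y : ℝ) : ℝ :=
  ⨆ ℓ : {ℓ : ℝ → ℝ // LipschitzWith 1 ℓ ∧ Function.Periodic ℓ 1},
    |(∫ x in (0:ℝ)..1, ℓ.1 x * f x) - ℓ.1 y|

/-- BV norm for (not necessarily C¹) functions of bounded variation. -/
noncomputable def bvBV (u : ℝ → ℝ) : ℝ :=
  l1 u + (eVariationOn u (Set.Icc (0:ℝ) 1)).toReal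
/-!
On the window `[x - 1/2, x + 1/2]` the sawtooth is `g(y - x) = y - x`, and periodicity lets us
integrate over that window instead of `[0, 1]`. Since `f` has mass one on every window of length one,
`Φ_f(x) = x + ε (∫_{x-1/2}^{x+1/2} y f(y) dy - x)`, and the fundamental theorem of calculus
gives the derivative `1 + ε ((x + 1/2) f(x + 1/2) - (x - 1/2) f(x - 1/2) - 1)`,
which simplifies by `f(x - 1/2) = f(x + 1/2)`.
-/

theorem Continuous.hasDerivAt_intervalIntegral {E : Type*} [NormedAddCommGroup E]
    [NormedSpace ℝ E] [CompleteSpace E] {g : ℝ → E} {u v : ℝ → ℝ} {u' v' x : ℝ}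
    (hg : Continuous g) (hu : HasDerivAt u u' x) (hv : HasDerivAt v v' x) :
    HasDerivAt (fun z => ∫ y in u z..v z, g y) (v' • g (v x) - u' • g (u x)) x := by
  have hsplit : (fun z => ∫ y in u z..v z, g y)
      = fun z => (∫ y in (0 : ℝ)..v z, g y) - ∫ y in (0 : ℝ)..u z, g y := by
    funext z
    exact (intervalIntegral.integral_interval_sub_left
      (hg.intervalIntegrable _ _) (hg.intervalIntegrable _ _)).symm
  rw [hsplit]
  exact ((hg.integral_hasStrictDerivAt 0 (v x)).hasDerivAt.scomp x hv).sub
    ((hg.integral_hasStrictDerivAt 0 (u x)).hasDerivAt.scomp x hu)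

theorem saw_periodic : Periodic saw 1 := by
  intro u
  have hfract : Int.fract (u + 1 + 1/2) = Int.fract (u + 1/2) := by
    rw [add_right_comm, Int.fract_add_one]
  simp only [saw, hfract, round_add_one]
  split_ifs
  · rfl
  · push_cast; ring

theorem saw_eq_self {u : ℝ} (hu : u ∈ Ioo (-(1/2)) (1/2)) : saw u = u := by
  obtain ⟨hlo, hhi⟩ := hu
  have hfract : Int.fract (u + 1/2) = u + 1/2 := by
    rw [Int.fract_eq_self]; constructor <;> linarith
  have hround : round u = 0 := by
    rw [round_eq, Int.floor_eq_zero_iff]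
    constructor <;> linarith
  rw [saw, if_neg (by rw [hfract]; linarith), hround]
  simp

/-- On the window `[z - 1/2, z + 1/2]` the sawtooth `saw (· - z)` agrees with `· - z` except at
the endpoint `z + 1/2`, a null set. -/
theorem integral_saw_sub_mul_eq {f : ℝ → ℝ} (hf : Periodic f 1) (z : ℝ) :
    ∫ y in (0 : ℝ)..1, saw (y - z) * f y = ∫ y in (z - 1/2)..(z + 1/2), (y - z) * f y := by
  have hper : Periodic (fun y => saw (y - z) * f y) 1 := fun y => by
    simp only [add_sub_right_comm y 1 z, saw_periodic (y - z), hf y]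
  have hnull : ∀ᵐ y ∂volume, y ≠ z + 1/2 := by
    simp [ae_iff, measure_singleton]
  have hsaw : ∀ᵐ y ∂volume, y ∈ uIoc (z - 1/2) (z + 1/2) → saw (y - z) * f y = (y - z) * f y := by
    filter_upwards [hnull] with y hy hmem
    rw [uIoc_of_le (by linarith)] at hmem
    rw [saw_eq_self ⟨by linarith [hmem.1], by linarith [lt_of_le_of_ne hmem.2 hy]⟩]
  have hwindow := hper.intervalIntegral_add_eq 0 (z - 1/2)
  rw [zero_add, show z - 1/2 + 1 = z + 1/2 by ring] at hwindow
  rw [hwindow]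
  exact intervalIntegral.integral_congr_ae hsaw

theorem Phi_eq {ε : ℝ} {f : ℝ → ℝ} (hf : PropF f) (z : ℝ) :
    Phi ε f z = z + ε * ((∫ y in (z - 1/2)..(z + 1/2), y * f y) - z) := by
  obtain ⟨hcont, hper, -, hmass⟩ := hf
  have hmass' : ∫ y in (z - 1/2)..(z + 1/2), f y = 1 := by
    rw [show z + 1/2 = z - 1/2 + 1 by ring, hper.intervalIntegral_add_eq (z - 1/2) 0, zero_add,
      hmass]
  have hsplit : ∫ y in (z - 1/2)..(z + 1/2), (y - z) * f y
      = (∫ y in (z - 1/2)..(z + 1/2), y * f y) - z * ∫ y in (z - 1/2)..(z + 1/2), f y := by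
    simp only [sub_mul]
    rw [intervalIntegral.integral_sub, intervalIntegral.integral_const_mul]
    · exact (continuous_id.mul hcont.continuous).intervalIntegrable _ _
    · exact (continuous_const.mul hcont.continuous).intervalIntegrable _ _
  rw [Phi, integral_saw_sub_mul_eq hper, hsplit, hmass', mul_one]

theorem coupling_hasDerivAt_general (ε : ℝ) (f : ℝ → ℝ) (hf : PropF f) (x : ℝ) :
    HasDerivAt (Phi ε f) (1 + ε * (f (x + 1/2) - 1)) x := by
  have hcont : Continuous fun y => y * f y := continuous_id.mul hf.1.continuous
  have hshift : f (x - 1/2) = f (x + 1/2) := by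
    rw [← hf.2.1 (x - 1/2)]; ring_nf
  have hwindow := hcont.hasDerivAt_intervalIntegral
    ((hasDerivAt_id' x).sub_const (1/2)) ((hasDerivAt_id' x).add_const (1/2))
  have hPhi : HasDerivAt (fun z => z + ε * ((∫ y in (z - 1/2)..(z + 1/2), y * f y) - z))
      (1 + ε * ((1 : ℝ) • ((x + 1/2) * f (x + 1/2)) - (1 : ℝ) • ((x - 1/2) * f (x - 1/2)) - 1)) x :=
    (hasDerivAt_id' x).add ((hwindow.sub (hasDerivAt_id' x)).const_mul ε)
  rw [funext (Phi_eq hf)]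
  convert hPhi using 1
  rw [one_smul, one_smul, hshift]
  ring

/-- the coupling map `Φ_f` is differentiable with
`Φ_f'(x) = 1 + ε (f(x + 1/2) - 1)`. -/
theorem coupling_hasDerivAt (ε : ℝ) (hε0 : 0 ≤ ε) (hε1 : ε < 1)
    (f : ℝ → ℝ) (hf : PropF f) (x : ℝ) :
    HasDerivAt (Phi ε f) (1 + ε * (f (x + 1/2) - 1)) x :=
  coupling_hasDerivAt_general ε f hf x
end

section
/- Let T: 𝕋 → 𝕋 be C², N-fold covering, with min|T'| = ω > 1 and max|T''| = D. Let P_T denote the transfer (Perron–Frobenius) operator of T. For any C¹ function f: 𝕋 → ℝ with f ≥ 0, one has var(P_T f) ≤ (1/ω)·var(f) + (D/ω²)·‖f‖₁, where var(f) = ∫|f'| dλ and ‖f‖₁ = ∫|f| dλ. -/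
open MeasureTheory Function Set

/-!
Since `|T'| ≥ ω`, `T'` has constant sign; say `T' ≥ ω` (otherwise conjugate by `x ↦ -x`). Then
`T` is an increasing bijection of `ℝ` with inverse `ψ`, and `P_T f (y) = ∑_{k < N} g (ψ (y + k))`
with `g = f / T'`. Differentiating term by term, the variation of `P_T f` over `[0, 1]` is at most
that of `g ∘ ψ` over `[0, N]`, which by the substitution `x = ψ z` is the variation of `g` over one
period. Finally `g' = f' / T' - f T'' / T'²` is bounded by `|f'| / ω + D |f| / ω²`.
-/

theorem Function.Periodic.deriv {𝕜 F : Type*} [NontriviallyNormedField 𝕜] [NormedAddCommGroup F]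
    [NormedSpace 𝕜 F] {f : 𝕜 → F} {c : 𝕜} (hf : Periodic f c) : Periodic (deriv f) c := by
  intro x
  rw [← deriv_comp_add_const, show (fun y => f (y + c)) = f from funext hf]

theorem Function.Periodic.intervalIntegral_comp_neg {E : Type*} [NormedAddCommGroup E]
    [NormedSpace ℝ E] {u : ℝ → E} {c : ℝ} (hu : Periodic u c) :
    ∫ x in (0:ℝ)..c, u (-x) = ∫ x in (0:ℝ)..c, u x := by
  rw [intervalIntegral.integral_comp_neg, neg_zero]
  simpa using hu.intervalIntegral_add_eq (-c) 0

theorem tvar_comp_neg {f : ℝ → ℝ} (hf : Periodic f 1) : tvar (fun x => f (-x)) = tvar f := by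
  simp only [tvar, deriv_comp_neg, abs_neg]
  exact (hf.deriv.comp abs).intervalIntegral_comp_neg

theorem l1_comp_neg {f : ℝ → ℝ} (hf : Periodic f 1) : l1 (fun x => f (-x)) = l1 f :=
  (hf.comp abs).intervalIntegral_comp_neg

theorem transfer_comp_neg {T : ℝ → ℝ} (hT : Bijective T) (N : ℕ) (f : ℝ → ℝ) :
    transfer (fun x => T (-x)) N (fun x => f (-x)) = transfer T N f := by
  have hTneg : Bijective (fun x => T (-x)) := hT.comp neg_bijective
  have hinv : ∀ y, invFun (fun x => T (-x)) y = -invFun T y := fun y =>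
    hTneg.injective <| by
      simp only [neg_neg, invFun_eq (hTneg.surjective y), invFun_eq (hT.surjective y)]
  funext y
  simp only [transfer, hinv, neg_neg, deriv_comp_neg, abs_neg]

theorem apply_add_nat_of_apply_add_one {T : ℝ → ℝ} {c : ℝ} (h : ∀ x, T (x + 1) = T x + c)
    (n : ℕ) (x : ℝ) : T (x + n) = T x + n * c := by
  induction n with
  | zero => simp
  | succ n ih => rw [Nat.cast_succ, ← add_assoc, h, ih]; ring

theorem surjective_of_apply_add_one {T : ℝ → ℝ} {c : ℝ} (hT : Continuous T) (hc : 0 < c)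
    (h : ∀ x, T (x + 1) = T x + c) : Surjective T := by
  intro y
  obtain ⟨n, hn⟩ := exists_nat_ge (|y - T 0| / c)
  have hle : |y - T 0| ≤ n * c := (div_le_iff₀ hc).mp hn
  have hleft : T (-n) = T 0 - n * c := by
    have := apply_add_nat_of_apply_add_one h n (-n)
    rw [neg_add_cancel] at this
    linarith
  have hright : T n = T 0 + n * c := by simpa using apply_add_nat_of_apply_add_one h n 0
  have hy : y ∈ Icc (T (-n)) (T n) := by
    rw [hleft, hright]; constructor <;> linarith [abs_le.mp hle]
  obtain ⟨x, -, hx⟩ := intermediate_value_Icc (by simp) hT.continuousOn hy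
  exact ⟨x, hx⟩

theorem StrictMono.invFun_eq_orderIsoOfSurjective_symm {α β : Type*} [LinearOrder α]
    [Preorder β] [Nonempty α] {T : α → β} (hmono : StrictMono T) (hsurj : Surjective T) :
    invFun T = (hmono.orderIsoOfSurjective T hsurj).symm :=
  invFun_eq_of_injective_of_rightInverse hmono.injective
    (StrictMono.orderIsoOfSurjective_self_symm_apply T hmono hsurj)

theorem contDiff_invFun_of_deriv_pos {n : WithTop ℕ∞} {T : ℝ → ℝ} (hT : ContDiff ℝ n T)
    (hn : n ≠ 0) (hpos : ∀ x, 0 < deriv T x) (hsurj : Surjective T) :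
    ContDiff ℝ n (invFun T) := by
  have hmono : StrictMono T := strictMono_of_deriv_pos hpos
  rw [hmono.invFun_eq_orderIsoOfSurjective_symm hsurj]
  exact (hmono.orderIsoOfSurjective T hsurj).toHomeomorph.contDiff_symm_deriv
    (fun x => (hpos x).ne') (fun x => ((hT.differentiable hn) x).hasDerivAt) hT

theorem tvar_sum_comp_add_nat_le {h : ℝ → ℝ} (hh : ContDiff ℝ 1 h) (N : ℕ) :
    tvar (fun y => ∑ k ∈ Finset.range N, h (y + k)) ≤ ∫ z in (0:ℝ)..N, |deriv h z| := by
  have hd : Differentiable ℝ h := hh.differentiable one_ne_zero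
  have hc : Continuous fun z => |deriv h z| := (hh.continuous_deriv le_rfl).abs
  have hderiv : ∀ y, deriv (fun y => ∑ k ∈ Finset.range N, h (y + k)) y
      = ∑ k ∈ Finset.range N, deriv h (y + k) := fun y =>
    (HasDerivAt.fun_sum (u := Finset.range N) fun k _ =>
      (hd _).hasDerivAt.comp_add_const y (k : ℝ)).deriv
  have hshift : ∀ k : ℕ, Continuous fun y => |deriv h (y + k)| :=
    fun k => hc.comp (continuous_add_const _)
  calc tvar (fun y => ∑ k ∈ Finset.range N, h (y + k))
      ≤ ∫ y in (0:ℝ)..1, ∑ k ∈ Finset.range N, |deriv h (y + k)| := by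
        refine intervalIntegral.integral_mono_on zero_le_one ?_ ?_ fun y _ => ?_
        · simp only [hderiv]
          exact (continuous_finsetSum _ fun k _ =>
            (hh.continuous_deriv le_rfl).comp (continuous_add_const _)).abs.intervalIntegrable _ _
        · exact (continuous_finsetSum _ fun k _ => hshift k).intervalIntegrable _ _
        · rw [hderiv]; exact Finset.abs_sum_le_sum_abs _ _
    _ = ∑ k ∈ Finset.range N, ∫ z in (k:ℝ)..((k + 1 : ℕ) : ℝ), |deriv h z| := by
        rw [intervalIntegral.integral_finsetSum fun k _ => (hshift k).intervalIntegrable _ _]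
        refine Finset.sum_congr rfl fun k _ => ?_
        rw [intervalIntegral.integral_comp_add_right (fun z => |deriv h z|)]
        push_cast; ring_nf
    _ = ∫ z in (0:ℝ)..N, |deriv h z| := by
        simpa using intervalIntegral.sum_integral_adjacent_intervals
          (a := fun k : ℕ => (k : ℝ)) fun k _ => hc.intervalIntegrable _ _

theorem integral_abs_deriv_comp_of_monotone {g ψ : ℝ → ℝ} (hg : ContDiff ℝ 1 g)
    (hψ : ContDiff ℝ 1 ψ) (hmono : Monotone ψ) (a b : ℝ) :
    ∫ z in a..b, |deriv (g ∘ ψ) z| = ∫ x in ψ a..ψ b, |deriv g x| := by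
  have hψd : Differentiable ℝ ψ := hψ.differentiable one_ne_zero
  have hchain : ∀ z, |deriv (g ∘ ψ) z| = ((fun x => |deriv g x|) ∘ ψ) z * deriv ψ z := fun z => by
    rw [deriv_comp z ((hg.differentiable one_ne_zero) _) (hψd z), abs_mul,
      abs_of_nonneg hmono.deriv_nonneg, comp_apply]
  simp only [hchain]
  exact intervalIntegral.integral_comp_mul_deriv (fun z _ => (hψd z).hasDerivAt)
    (hψ.continuous_deriv le_rfl).continuousOn (hg.continuous_deriv le_rfl).abs

theorem abs_deriv_div_le {u d : ℝ → ℝ} {x ω D : ℝ} (hu : DifferentiableAt ℝ u x)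
    (hd : DifferentiableAt ℝ d x) (hω : 0 < ω) (hdx : ω ≤ d x) (hd' : |deriv d x| ≤ D) :
    |deriv (fun y => u y / d y) x| ≤ 1 / ω * |deriv u x| + D / ω ^ 2 * |u x| := by
  have hdpos : 0 < d x := hω.trans_le hdx
  rw [(hu.hasDerivAt.fun_div hd.hasDerivAt hdpos.ne').deriv]
  have hnum : |deriv u x * d x - u x * deriv d x| ≤ |deriv u x| * d x + |u x| * D := by
    refine (abs_sub _ _).trans ?_
    rw [abs_mul, abs_mul, abs_of_pos hdpos]
    gcongr
  calc |(deriv u x * d x - u x * deriv d x) / d x ^ 2|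
      ≤ (|deriv u x| * d x + |u x| * D) / d x ^ 2 := by
        rw [abs_div, abs_of_pos (pow_pos hdpos 2)]
        gcongr
    _ = |deriv u x| / d x + |u x| * D / d x ^ 2 := by field_simp
    _ ≤ |deriv u x| / ω + |u x| * D / ω ^ 2 := by
        have : 0 ≤ D := (abs_nonneg _).trans hd'
        gcongr
    _ = 1 / ω * |deriv u x| + D / ω ^ 2 * |u x| := by ring

theorem integral_add_one_eq_mul_tvar_add_mul_l1 {f : ℝ → ℝ} (hf : ContDiff ℝ 1 f)
    (hfper : Periodic f 1) (a b c : ℝ) :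
    ∫ x in a..a + 1, (b * |deriv f x| + c * |f x|) = b * tvar f + c * l1 f := by
  have hper : Periodic (fun x => b * |deriv f x| + c * |f x|) 1 := fun x => by
    simp only [hfper x, hfper.deriv x]
  rw [hper.intervalIntegral_add_eq a 0, zero_add, intervalIntegral.integral_add,
    intervalIntegral.integral_const_mul, intervalIntegral.integral_const_mul, tvar, l1]
  · exact (continuous_const.mul (hf.continuous_deriv le_rfl).abs).intervalIntegrable _ _
  · exact (continuous_const.mul hf.continuous.abs).intervalIntegrable _ _

theorem tvar_transfer_le_of_le_deriv {T : ℝ → ℝ} {N : ℕ} {ω D : ℝ} (hT : ContDiff ℝ 2 T)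
    (hcov : ∀ x, T (x + 1) = T x + N) (hω : 0 < ω) (hωT : ∀ x, ω ≤ deriv T x)
    (hD : ∀ x, |deriv (deriv T) x| ≤ D) {f : ℝ → ℝ} (hf : ContDiff ℝ 1 f) (hfper : Periodic f 1) :
    tvar (transfer T N f) ≤ 1 / ω * tvar f + D / ω ^ 2 * l1 f := by
  have hpos : ∀ x, 0 < deriv T x := fun x => hω.trans_le (hωT x)
  have hmono : StrictMono T := strictMono_of_deriv_pos hpos
  have hN : (0:ℝ) < N := by
    have h01 := hmono (lt_add_one 0)
    rw [hcov] at h01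
    linarith
  have hsurj : Surjective T := surjective_of_apply_add_one hT.continuous hN hcov
  have hψ : ContDiff ℝ 1 (invFun T) :=
    contDiff_invFun_of_deriv_pos (hT.of_le one_le_two) one_ne_zero hpos hsurj
  have hψmono : Monotone (invFun T) := by
    rw [hmono.invFun_eq_orderIsoOfSurjective_symm hsurj]
    exact OrderIso.monotone _
  set ψ := invFun T
  have hψN : ψ N = ψ 0 + 1 := hmono.injective <| by
    rw [invFun_eq (hsurj _), hcov, invFun_eq (hsurj _), zero_add]
  have hT' : ContDiff ℝ 1 (deriv T) := hT.deriv'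
  set g : ℝ → ℝ := fun x => f x / deriv T x
  have hg : ContDiff ℝ 1 g := hf.div hT' fun x => (hpos x).ne'
  have htransfer : transfer T N f = fun y => ∑ k ∈ Finset.range N, (g ∘ ψ) (y + k) := by
    funext y
    simp only [transfer, comp_apply, g, ψ, abs_of_pos (hpos _)]
  calc tvar (transfer T N f) ≤ ∫ z in (0:ℝ)..N, |deriv (g ∘ ψ) z| :=
        htransfer ▸ tvar_sum_comp_add_nat_le (hg.comp hψ) N
    _ = ∫ x in ψ 0..ψ 0 + 1, |deriv g x| := by
        rw [integral_abs_deriv_comp_of_monotone hg hψ hψmono, hψN]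
    _ ≤ ∫ x in ψ 0..ψ 0 + 1, (1 / ω * |deriv f x| + D / ω ^ 2 * |f x|) :=
        intervalIntegral.integral_mono_on (by linarith)
          ((hg.continuous_deriv le_rfl).abs.intervalIntegrable _ _)
          (((continuous_const.mul (hf.continuous_deriv le_rfl).abs).add
            (continuous_const.mul hf.continuous.abs)).intervalIntegrable _ _)
          fun x _ => abs_deriv_div_le (hf.differentiable one_ne_zero x)
            (hT'.differentiable one_ne_zero x) hω (hωT x) (hD x)
    _ = 1 / ω * tvar f + D / ω ^ 2 * l1 f := integral_add_one_eq_mul_tvar_add_mul_l1 hf hfper _ _ _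

theorem tvar_transfer_le_of_le_neg_deriv {T : ℝ → ℝ} {N : ℕ} {ω D : ℝ} (hT : ContDiff ℝ 2 T)
    (hcov : ∀ x, T (x + 1) = T x - N) (hω : 0 < ω) (hωT : ∀ x, ω ≤ -deriv T x)
    (hD : ∀ x, |deriv (deriv T) x| ≤ D) {f : ℝ → ℝ} (hf : ContDiff ℝ 1 f) (hfper : Periodic f 1) :
    tvar (transfer T N f) ≤ 1 / ω * tvar f + D / ω ^ 2 * l1 f := by
  set S : ℝ → ℝ := fun x => T (-x)
  have hS : ContDiff ℝ 2 S := hT.comp contDiff_neg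
  have hS' : deriv S = fun x => -deriv T (-x) := funext fun x => deriv_comp_neg T x
  have hScov : ∀ x, S (x + 1) = S x + N := fun x => by
    have h := hcov (-(x + 1))
    rw [show -(x + 1) + 1 = -x by ring] at h
    simp only [S]
    linarith
  have hanti : StrictAnti T := strictAnti_of_deriv_neg fun x => by linarith [hωT x]
  have hN : (0:ℝ) < N := by
    have h01 := hanti (lt_add_one 0)
    rw [hcov] at h01
    linarith
  have hSsurj : Surjective S := surjective_of_apply_add_one hS.continuous hN hScov
  have hTbij : Bijective T := ⟨hanti.injective, fun y => (hSsurj y).elim fun x hx => ⟨-x, hx⟩⟩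
  have hSbound := tvar_transfer_le_of_le_deriv (f := fun x => f (-x)) hS hScov hω
    (fun x => by rw [hS']; exact hωT _)
    (fun x => by rw [hS', deriv.fun_neg, deriv_comp_neg, neg_neg]; exact hD _)
    (hf.comp contDiff_neg) (fun x => by simp only [neg_add]; exact hfper.neg (-x))
  rwa [transfer_comp_neg hTbij, tvar_comp_neg hfper, l1_comp_neg hfper] at hSbound

theorem transfer_var_bound_general (T : ℝ → ℝ) (N : ℕ) (ω D : ℝ)
    (hT : ContDiff ℝ 2 T)
    (hcov : (∀ x, T (x + 1) = T x + N) ∨ (∀ x, T (x + 1) = T x - N))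
    (hω : ∀ x, ω ≤ |deriv T x|) (hω1 : 1 < ω)
    (hD : ∀ x, |deriv (deriv T) x| ≤ D)
    (f : ℝ → ℝ) (hf : ContDiff ℝ 1 f) (hfper : Function.Periodic f 1) :
    tvar (transfer T N f) ≤ (1 / ω) * tvar f + (D / ω ^ 2) * l1 f := by
  have hω0 : 0 < ω := by linarith
  have hTd : Differentiable ℝ T := hT.differentiable two_ne_zero
  rcases hasDerivWithinAt_forall_lt_or_forall_gt_of_forall_ne convex_univ
      (fun x _ => (hTd x).hasDerivAt.hasDerivWithinAt) (m := 0)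
      (fun x _ h0 => by linarith [hω x, abs_eq_zero.mpr h0]) with hneg | hpos
  · have hanti : StrictAnti T := strictAnti_of_deriv_neg fun x => hneg x trivial
    refine tvar_transfer_le_of_le_neg_deriv hT ?_ hω0
      (fun x => (abs_of_neg (hneg x trivial)).symm ▸ hω x) hD hf hfper
    refine hcov.resolve_left fun h => ?_
    have h01 := hanti (lt_add_one 0)
    rw [h] at h01
    linarith [N.cast_nonneg (α := ℝ)]
  · have hmono : StrictMono T := strictMono_of_deriv_pos fun x => hpos x trivial
    refine tvar_transfer_le_of_le_deriv hT ?_ hω0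
      (fun x => (abs_of_pos (hpos x trivial)).symm ▸ hω x) hD hf hfper
    refine hcov.resolve_right fun h => ?_
    have h01 := hmono (lt_add_one 0)
    rw [h] at h01
    linarith [N.cast_nonneg (α := ℝ)]

/-- Lasota–Yorke type variation bound for the transfer operator of `T`:
`var(P_T f) ≤ (1/ω) var(f) + (D/ω²) ‖f‖₁`. -/
theorem transfer_var_bound (T : ℝ → ℝ) (N : ℕ) (ω D : ℝ)
    (hT : ContDiff ℝ 2 T)
    (hcov : (∀ x, T (x + 1) = T x + N) ∨ (∀ x, T (x + 1) = T x - N))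
    (hω : ∀ x, ω ≤ |deriv T x|) (hω1 : 1 < ω)
    (hD : ∀ x, |deriv (deriv T) x| ≤ D)
    (f : ℝ → ℝ) (hf : ContDiff ℝ 1 f) (hfper : Function.Periodic f 1)
    (hfpos : ∀ x, 0 ≤ f x) :
    tvar (transfer T N f) ≤ (1 / ω) * tvar f + (D / ω ^ 2) * l1 f :=
  transfer_var_bound_general T N ω D hT hcov hω hω1 hD f hf hfper
end

section
/- Let 𝕋 be the circle with Lebesgue measure λ. If ℓ is of bounded variation and h ∈ L¹(𝕋), then |∫ ℓ·h dλ| ≤ var(ℓ)·sup_z |∫_{[0,z]} h dλ| + |∫ h dλ|·‖ℓ‖_∞ ≤ 2‖ℓ‖_BV · sup_{0≤z≤1} |∫_{[0,z]} h dλ|. -/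
open MeasureTheory Function Set

/-!
Replace `ℓ` by the step functions `x ↦ ℓ (⌈N x⌉ / N)`. Against `h` such a step function integrates
to the Riemann–Stieltjes sum `∑ ℓ (tᵢ₊₁) (H tᵢ₊₁ - H tᵢ)`, where `tᵢ = i / N` and `H z = ∫₀^z h`;
summation by parts rewrites it as `ℓ 1 · H 1 - ∑ (ℓ tᵢ₊₁ - ℓ tᵢ) H tᵢ`, which is bounded by
`|H 1| ‖ℓ‖_∞ + var ℓ · sup |H|`. A function of bounded variation is continuous almost everywhere,
so the step functions converge to `ℓ` a.e. and dominated convergence passes the bound to `∫ ℓ h`.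
The second inequality only needs `|H 1| ≤ sup |H|` and `‖ℓ‖_∞ ≤ ‖ℓ‖_BV`; the latter comes from
integrating `|ℓ x| ≤ |ℓ y| + var ℓ` over `y`.
-/

open Filter Topology Interval

lemma sum_range_mul_sub_eq (a B : ℕ → ℝ) (N : ℕ) :
    ∑ i ∈ Finset.range N, a (i + 1) * (B (i + 1) - B i) =
      a N * B N - a 0 * B 0 - ∑ i ∈ Finset.range N, (a (i + 1) - a i) * B i := by
  induction N with
  | zero => simp
  | succ N ih => rw [Finset.sum_range_succ, Finset.sum_range_succ, ih]; ring

lemma abs_sum_range_mul_sub_le {a B : ℕ → ℝ} {N : ℕ} {M : ℝ} (hB₀ : B 0 = 0)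
    (hB : ∀ i < N, |B i| ≤ M) :
    |∑ i ∈ Finset.range N, a (i + 1) * (B (i + 1) - B i)| ≤
      (∑ i ∈ Finset.range N, |a (i + 1) - a i|) * M + |B N| * |a N| := by
  rw [sum_range_mul_sub_eq, hB₀, mul_zero, sub_zero, Finset.sum_mul, add_comm, mul_comm |B N|,
    ← abs_mul]
  refine (abs_sub _ _).trans (add_le_add_right ?_ _)
  refine (Finset.abs_sum_le_sum_abs _ _).trans (Finset.sum_le_sum fun i hi => ?_)
  rw [abs_mul]
  exact mul_le_mul_of_nonneg_left (hB i (Finset.mem_range.1 hi)) (abs_nonneg _)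

lemma BoundedVariationOn.sum_abs_sub_le {α : Type*} [LinearOrder α] {f : α → ℝ} {s : Set α}
    (hf : BoundedVariationOn f s) {u : ℕ → α} {n : ℕ} (hu : MonotoneOn u (Iic n))
    (us : ∀ i ≤ n, u i ∈ s) :
    ∑ i ∈ Finset.range n, |f (u (i + 1)) - f (u i)| ≤ (eVariationOn f s).toReal := by
  have hsum := eVariationOn.sum_le_of_monotoneOn_Iic (f := f) hu us
  simp_rw [edist_dist, Real.dist_eq] at hsum
  rw [← ENNReal.ofReal_sum_of_nonneg fun _ _ => abs_nonneg _] at hsum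
  exact (ENNReal.ofReal_le_iff_le_toReal hf).1 hsum

lemma BoundedVariationOn.abs_le_abs_add {α : Type*} [LinearOrder α] {f : α → ℝ} {s : Set α}
    (hf : BoundedVariationOn f s) {x y : α} (hx : x ∈ s) (hy : y ∈ s) :
    |f x| ≤ |f y| + (eVariationOn f s).toReal := by
  have := hf.dist_le hx hy
  rw [Real.dist_eq] at this
  linarith [abs_sub_abs_le_abs_sub (f x) (f y)]

lemma BoundedVariationOn.integrableOn_Icc {f : ℝ → ℝ} {a b : ℝ}
    (hf : BoundedVariationOn f (Icc a b)) : IntegrableOn f (Icc a b) := by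
  obtain ⟨p, q, hp, hq, rfl⟩ := hf.locallyBoundedVariationOn.exists_monotoneOn_sub_monotoneOn
  exact (hp.integrableOn_isCompact isCompact_Icc).sub (hq.integrableOn_isCompact isCompact_Icc)

lemma BoundedVariationOn.abs_le_bvBV {f : ℝ → ℝ} (hf : BoundedVariationOn f (Icc 0 1)) {x : ℝ}
    (hx : x ∈ Icc (0:ℝ) 1) : |f x| ≤ bvBV f := by
  have hint : IntervalIntegrable (fun y => |f y|) volume 0 1 :=
    ((intervalIntegrable_iff_integrableOn_Icc_of_le zero_le_one).2 hf.integrableOn_Icc).abs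
  have := intervalIntegral.integral_mono_on zero_le_one intervalIntegrable_const hint
    fun y hy => (sub_le_iff_le_add.2 (hf.abs_le_abs_add hx hy))
  rw [intervalIntegral.integral_const, sub_zero, one_smul] at this
  rw [bvBV, l1]
  linarith

noncomputable def ceilGrid (N : ℕ) (x : ℝ) : ℝ := ⌈N * x⌉ / N

lemma le_ceilGrid {N : ℕ} (hN : 0 < N) (x : ℝ) : x ≤ ceilGrid N x := by
  rw [ceilGrid, le_div_iff₀ (by positivity), mul_comm]
  exact Int.le_ceil _

lemma ceilGrid_lt {N : ℕ} (hN : 0 < N) (x : ℝ) : ceilGrid N x < x + 1 / N := by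
  rw [ceilGrid, div_lt_iff₀ (by positivity), add_mul, one_div_mul_cancel (by positivity),
    mul_comm]
  exact Int.ceil_lt_add_one _

lemma ceilGrid_mem_Icc {N : ℕ} {x : ℝ} (hx : x ∈ Icc (0:ℝ) 1) : ceilGrid N x ∈ Icc (0:ℝ) 1 := by
  rcases N.eq_zero_or_pos with rfl | hN
  · simp [ceilGrid]
  refine ⟨hx.1.trans (le_ceilGrid hN x), ?_⟩
  rw [ceilGrid, div_le_one (by positivity)]
  exact_mod_cast Int.ceil_le.2 (by simpa using mul_le_of_le_one_right (N.cast_nonneg) hx.2)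

lemma ceilGrid_eq {N i : ℕ} (hN : 0 < N) {x : ℝ} (hx : x ∈ Ioc ((i : ℝ) / N) ((i + 1 : ℕ) / N)) :
    ceilGrid N x = (i + 1 : ℕ) / N := by
  have hN' : (0 : ℝ) < N := by positivity
  obtain ⟨hlo, hhi⟩ := hx
  rw [div_lt_iff₀ hN', mul_comm] at hlo
  rw [le_div_iff₀ hN', mul_comm] at hhi
  have hceil : ⌈(N : ℝ) * x⌉ = (i + 1 : ℕ) :=
    Int.ceil_eq_iff.2 ⟨by push_cast; linarith, by exact_mod_cast hhi⟩
  rw [ceilGrid, hceil, Int.cast_natCast]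

lemma tendsto_ceilGrid (x : ℝ) : Tendsto (fun N : ℕ => ceilGrid N x) atTop (𝓝 x) := by
  have hlim : Tendsto (fun N : ℕ => x + 1 / (N : ℝ)) atTop (𝓝 x) := by
    simpa using tendsto_const_nhds.add (tendsto_one_div_atTop_nhds_zero_nat (𝕜 := ℝ))
  refine tendsto_of_tendsto_of_tendsto_of_le_of_le' tendsto_const_nhds hlim ?_ ?_ <;>
    filter_upwards [eventually_gt_atTop 0] with N hN
  exacts [le_ceilGrid hN x, (ceilGrid_lt hN x).le]

lemma measurable_comp_ceilGrid (f : ℝ → ℝ) (N : ℕ) : Measurable fun x => f (ceilGrid N x) :=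
  (measurable_from_top (f := fun k : ℤ => f (k / N))).comp
    (Int.measurable_ceil.comp (measurable_const_mul _))

lemma integral_comp_ceilGrid_mul (f : ℝ → ℝ) {h : ℝ → ℝ} {N : ℕ} (hN : 0 < N)
    (hh : IntervalIntegrable h volume 0 1) :
    ∫ x in (0:ℝ)..1, f (ceilGrid N x) * h x =
      ∑ i ∈ Finset.range N, f ((i + 1 : ℕ) / N) * ∫ x in (i / N : ℝ)..((i + 1 : ℕ) / N), h x := by
  have hgrid : ∀ k ≤ N, (k / N : ℝ) ∈ uIcc 0 1 := fun k hk => by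
    rw [uIcc_of_le zero_le_one]
    exact ⟨by positivity, div_le_one_of_le₀ (by exact_mod_cast hk) N.cast_nonneg⟩
  have hcell : ∀ i < N, EqOn (fun x => f (ceilGrid N x) * h x)
      (fun x => f ((i + 1 : ℕ) / N) * h x) (Ι (i / N : ℝ) ((i + 1 : ℕ) / N)) := by
    intro i _ x hx
    rw [uIoc_of_le (div_le_div_of_nonneg_right (by norm_cast; omega) N.cast_nonneg)] at hx
    simp only [ceilGrid_eq hN hx]
  have hint : ∀ i < N, IntervalIntegrable h volume (i / N : ℝ) ((i + 1 : ℕ) / N) := fun i hi =>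
    hh.mono_set (uIcc_subset_uIcc (hgrid i hi.le) (hgrid (i + 1) hi))
  have hsum := intervalIntegral.sum_integral_adjacent_intervals
    (a := fun k : ℕ => (k / N : ℝ)) (f := fun x => f (ceilGrid N x) * h x) (μ := volume)
    fun i hi => (intervalIntegrable_congr (hcell i hi)).2 ((hint i hi).const_mul _)
  rw [Nat.cast_zero, zero_div, div_self (by positivity)] at hsum
  rw [← hsum]
  refine Finset.sum_congr rfl fun i hi => ?_
  rw [← intervalIntegral.integral_const_mul]
  exact intervalIntegral.integral_congr_ae (.of_forall (hcell i (Finset.mem_range.1 hi)))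

lemma abs_integral_comp_ceilGrid_mul_le {ℓ h : ℝ → ℝ} (hℓ : BoundedVariationOn ℓ (Icc 0 1))
    (hh : IntervalIntegrable h volume 0 1) {M C : ℝ}
    (hM : ∀ z ∈ Icc (0:ℝ) 1, |∫ x in (0:ℝ)..z, h x| ≤ M) (hC : ∀ x ∈ Icc (0:ℝ) 1, |ℓ x| ≤ C)
    {N : ℕ} (hN : 0 < N) :
    |∫ x in (0:ℝ)..1, ℓ (ceilGrid N x) * h x| ≤
      (eVariationOn ℓ (Icc 0 1)).toReal * M + |∫ x in (0:ℝ)..1, h x| * C := by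
  have hgrid : ∀ k ≤ N, (k / N : ℝ) ∈ Icc 0 1 := fun k hk =>
    ⟨by positivity, div_le_one_of_le₀ (by exact_mod_cast hk) N.cast_nonneg⟩
  have hprim : ∀ k ≤ N, IntervalIntegrable h volume 0 (k / N : ℝ) := fun k hk =>
    hh.mono_set (uIcc_subset_uIcc left_mem_uIcc (by simpa [uIcc_of_le] using hgrid k hk))
  set H : ℝ → ℝ := fun z => ∫ x in (0:ℝ)..z, h x
  have hcell : ∀ i ∈ Finset.range N, ∫ x in (i / N : ℝ)..((i + 1 : ℕ) / N), h x =
      H ((i + 1 : ℕ) / N) - H (i / N) := fun i hi =>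
    have hi := Finset.mem_range.1 hi
    (intervalIntegral.integral_interval_sub_left (hprim _ hi) (hprim _ hi.le)).symm
  have hvar := hℓ.sum_abs_sub_le (u := fun k : ℕ => (k / N : ℝ)) (n := N)
    (fun i _ j _ hij => div_le_div_of_nonneg_right (by exact_mod_cast hij) N.cast_nonneg) hgrid
  rw [integral_comp_ceilGrid_mul ℓ hN hh, Finset.sum_congr rfl fun i hi => by rw [hcell i hi] ]
  refine (abs_sum_range_mul_sub_le (a := fun k : ℕ => ℓ (k / N)) (B := fun k : ℕ => H (k / N))
    (M := M) (by simp [H]) fun i hi => hM _ (hgrid i hi.le)).trans ?_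
  have hN1 : ((N : ℕ) / N : ℝ) = 1 := div_self (by positivity)
  simp only [hN1]
  have hM₀ : 0 ≤ M := (abs_nonneg _).trans (hM 0 ⟨le_rfl, zero_le_one⟩)
  gcongr
  exact hC 1 ⟨zero_le_one, le_rfl⟩

lemma tendsto_integral_comp_ceilGrid_mul {ℓ h : ℝ → ℝ} (hℓ : BoundedVariationOn ℓ (Icc 0 1))
    (hh : IntervalIntegrable h volume 0 1) :
    Tendsto (fun N : ℕ => ∫ x in (0:ℝ)..1, ℓ (ceilGrid N x) * h x) atTop
      (𝓝 (∫ x in (0:ℝ)..1, ℓ x * h x)) := by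
  set C := |ℓ 0| + (eVariationOn ℓ (Icc 0 1)).toReal
  have hC : ∀ x ∈ Icc (0:ℝ) 1, |ℓ x| ≤ C := fun x hx =>
    hℓ.abs_le_abs_add hx ⟨le_rfl, zero_le_one⟩
  have hIoc : ∀ x ∈ Ι (0:ℝ) 1, x ∈ Icc (0:ℝ) 1 := fun x hx =>
    Ioc_subset_Icc_self (by rwa [uIoc_of_le zero_le_one] at hx)
  refine intervalIntegral.tendsto_integral_filter_of_dominated_convergence (fun x => C * |h x|)
    (.of_forall fun N => (measurable_comp_ceilGrid ℓ N).aestronglyMeasurable.mul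
      hh.def'.aestronglyMeasurable)
    (.of_forall fun N => .of_forall fun x hx => ?_) (hh.abs.const_mul C) ?_
  · rw [Real.norm_eq_abs, abs_mul]
    exact mul_le_mul_of_nonneg_right (hC _ (ceilGrid_mem_Icc (hIoc x hx))) (abs_nonneg _)
  · filter_upwards [hℓ.locallyBoundedVariationOn.ae_differentiableWithinAt_of_mem] with x hx hxI
    have hcont := (hx (hIoc x hxI)).continuousWithinAt
    exact (hcont.tendsto.comp (tendsto_nhdsWithin_iff.2 ⟨tendsto_ceilGrid x,
      .of_forall fun N => ceilGrid_mem_Icc (hIoc x hxI)⟩)).mul_const (h x)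

lemma abs_integral_mul_le_of_bounds {ℓ h : ℝ → ℝ} (hℓ : BoundedVariationOn ℓ (Icc 0 1))
    (hh : IntervalIntegrable h volume 0 1) {M C : ℝ}
    (hM : ∀ z ∈ Icc (0:ℝ) 1, |∫ x in (0:ℝ)..z, h x| ≤ M) (hC : ∀ x ∈ Icc (0:ℝ) 1, |ℓ x| ≤ C) :
    |∫ x in (0:ℝ)..1, ℓ x * h x| ≤
      (eVariationOn ℓ (Icc 0 1)).toReal * M + |∫ x in (0:ℝ)..1, h x| * C :=
  le_of_tendsto (tendsto_integral_comp_ceilGrid_mul hℓ hh).abs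
    ((eventually_gt_atTop 0).mono fun _ hN => abs_integral_comp_ceilGrid_mul_le hℓ hh hM hC hN)

/-- Keller's Lemma 11: for `ℓ` of bounded variation and `h ∈ L¹`,
`|∫ ℓ h| ≤ var(ℓ) sup_z |∫_0^z h| + |∫ h| ‖ℓ‖_∞ ≤ 2 ‖ℓ‖_BV sup_z |∫_0^z h|`. -/
theorem keller_lemma11 (ℓ h : ℝ → ℝ)
    (hℓ : BoundedVariationOn ℓ (Set.Icc 0 1))
    (hh : IntegrableOn h (Set.Icc 0 1)) :
    |∫ x in (0:ℝ)..1, ℓ x * h x| ≤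
      (eVariationOn ℓ (Set.Icc 0 1)).toReal *
        (⨆ z : Set.Icc (0:ℝ) 1, |∫ x in (0:ℝ)..(z : ℝ), h x|) +
      |∫ x in (0:ℝ)..1, h x| * (⨆ x : Set.Icc (0:ℝ) 1, |ℓ (x : ℝ)|) ∧
    (eVariationOn ℓ (Set.Icc 0 1)).toReal *
        (⨆ z : Set.Icc (0:ℝ) 1, |∫ x in (0:ℝ)..(z : ℝ), h x|) +
      |∫ x in (0:ℝ)..1, h x| * (⨆ x : Set.Icc (0:ℝ) 1, |ℓ (x : ℝ)|) ≤
      2 * bvBV ℓ * (⨆ z : Set.Icc (0:ℝ) 1, |∫ x in (0:ℝ)..(z : ℝ), h x|) := by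
  have h01 : Icc (0:ℝ) 1 = [[0, 1]] := (uIcc_of_le zero_le_one).symm
  have hhi : IntervalIntegrable h volume 0 1 := (h01 ▸ hh).intervalIntegrable
  set M := ⨆ z : Icc (0:ℝ) 1, |∫ x in (0:ℝ)..(z : ℝ), h x|
  set C := ⨆ x : Icc (0:ℝ) 1, |ℓ (x : ℝ)|
  have hM : ∀ z ∈ Icc (0:ℝ) 1, |∫ x in (0:ℝ)..z, h x| ≤ M := by
    have hcont := (intervalIntegral.continuousOn_primitive_interval (h01 ▸ hh)).abs
    rw [← h01] at hcont
    have hbdd := isCompact_Icc.bddAbove_image hcont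
    rw [image_eq_range] at hbdd
    exact fun z hz => le_ciSup hbdd ⟨z, hz⟩
  have hC : ∀ x ∈ Icc (0:ℝ) 1, |ℓ x| ≤ C := fun x hx =>
    le_ciSup ⟨bvBV ℓ, forall_mem_range.2 fun y : Icc (0:ℝ) 1 => hℓ.abs_le_bvBV y.2⟩ ⟨x, hx⟩
  refine ⟨abs_integral_mul_le_of_bounds hℓ hhi hM hC, ?_⟩
  have hM₀ : 0 ≤ M := (abs_nonneg _).trans (hM 0 ⟨le_rfl, zero_le_one⟩)
  have hC₀ : 0 ≤ C := (abs_nonneg _).trans (hC 0 ⟨le_rfl, zero_le_one⟩)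
  have hCbv : C ≤ bvBV ℓ := ciSup_le fun x => hℓ.abs_le_bvBV x.2
  have hVbv : (eVariationOn ℓ (Icc 0 1)).toReal ≤ bvBV ℓ :=
    le_add_of_nonneg_left (intervalIntegral.integral_nonneg zero_le_one fun _ _ => abs_nonneg _)
  calc _ ≤ bvBV ℓ * M + M * bvBV ℓ := by
        gcongr
        exact hM 1 ⟨zero_le_one, le_rfl⟩
    _ = 2 * bvBV ℓ * M := by ring
end
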